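/- Let γ : [0,L] → ℝⁿ be a C² curve parametrized by arclength with ‖γ''(t)‖ = 1, and V a C² normal vector field along γ (V·γ' ≡ 0). Define γ_ε(t) = γ(t) + εV(t) and the rescaled curve Γ_ε(t) = (L/ℓ(γ_ε)) γ_ε(t), where ℓ denotes arclength. Then d/dε|_{ε=0} κΓ_ε(t) = γ''(t)·V''(t) − 2γ'(t)·V'(t) + (1/L)∫₀ᴸ γ'(u)·V'(u) du. -/

import Mathlib

/-! Curvature is homogeneous of degree `-1` under scaling, so
`κ(Γ_ε)(t) = (ℓ(γ_ε) / L) · κ(γ_ε)(t)` and the product rule splits the variation in two.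
The length varies by `∫ γ'·V'`: differentiation under the integral sign is justified because
`ε ↦ ‖γ' + ε V'‖` is `‖V'‖`-Lipschitz. The curvature `κ(γ_ε)(t)` depends only on the velocity
`γ' + ε V'` and acceleration `γ'' + ε V''` at `t`; at `ε = 0` unit speed forces `γ''·γ' = 0`,
so the vector in the numerator is `γ''`, its norm varies by `γ''·V'' + 2 γ'·V'`, and the
denominator `‖γ'‖⁴` varies by `4 γ'·V'`. -/

/-- Curvature of a regular C² curve: κα = ‖α''(α'·α') − α'(α''·α')‖ · ‖α'‖⁻⁴. -/
noncomputable def curv {n : ℕ} (α : ℝ → EuclideanSpace ℝ (Fin n)) (t : ℝ) : ℝ :=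
  ‖(inner ℝ (deriv α t) (deriv α t) : ℝ) • deriv (deriv α) t -
      (inner ℝ (deriv (deriv α) t) (deriv α t) : ℝ) • deriv α t‖ / ‖deriv α t‖ ^ 4

open scoped RealInnerProductSpace Interval

section

variable {E : Type*} [NormedAddCommGroup E] [InnerProductSpace ℝ E]

theorem HasDerivAt.norm {f : ℝ → E} {f' : E} {x : ℝ} (hf : HasDerivAt f f' x) (hx : f x ≠ 0) :
    HasDerivAt (fun y => ‖f y‖) (⟪f x, f'⟫ / ‖f x‖) x := by
  have hx' : ‖f x‖ ≠ 0 := norm_ne_zero_iff.mpr hx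
  have h := hf.norm_sq.sqrt (pow_ne_zero 2 hx')
  simp only [Real.sqrt_sq (norm_nonneg _)] at h
  convert h using 1
  field_simp

theorem hasDerivAt_add_smul (a a' : E) (x : ℝ) : HasDerivAt (fun ε : ℝ => a + ε • a') a' x := by
  simpa using ((hasDerivAt_id x).smul_const a').const_add a

theorem HasDerivAt.inner_eq_zero_of_norm_eqOn {f : ℝ → E} {f' : E} {s : Set ℝ} {t r : ℝ}
    (hf : HasDerivAt f f' t) (hs : UniqueDiffWithinAt ℝ s t) (ht : t ∈ s)
    (hnorm : ∀ u ∈ s, ‖f u‖ = r) : ⟪f t, f'⟫ = 0 := by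
  have hconst : HasDerivWithinAt (fun u => ‖f u‖ ^ 2) 0 s t :=
    (hasDerivWithinAt_const t s (r ^ 2)).congr (fun u hu => by rw [hnorm u hu])
      (by rw [hnorm t ht])
  have := hs.eq_deriv s hf.norm_sq.hasDerivWithinAt hconst
  linarith

theorem deriv_add_smul {f g : ℝ → E} (hf : Differentiable ℝ f) (hg : Differentiable ℝ g) (c : ℝ) :
    deriv (fun s => f s + c • g s) = fun s => deriv f s + c • deriv g s := by
  funext s
  rw [deriv_fun_add (g := fun s => c • g s) (hf s) ((hg s).const_smul c),
    deriv_fun_const_smul_field]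

theorem lipschitzWith_norm_add_smul (a w : E) :
    LipschitzWith ‖w‖₊ (fun ε : ℝ => ‖a + ε • w‖) := by
  refine LipschitzWith.of_dist_le_mul fun x y => ?_
  calc dist ‖a + x • w‖ ‖a + y • w‖ ≤ ‖(a + x • w) - (a + y • w)‖ := dist_norm_norm_le _ _
    _ = ‖w‖ * dist x y := by
      rw [add_sub_add_left_eq_sub, ← sub_smul, norm_smul, mul_comm, Real.dist_eq, Real.norm_eq_abs]

theorem hasDerivAt_intervalIntegral_norm_add_smul {G W : ℝ → E} {a b : ℝ}
    (hG : Continuous G) (hW : Continuous W) (hG0 : ∀ u ∈ Ι a b, G u ≠ 0) :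
    HasDerivAt (fun ε : ℝ => ∫ u in a..b, ‖G u + ε • W u‖)
      (∫ u in a..b, ⟪G u, W u⟫ / ‖G u‖) 0 := by
  have hcont (ε : ℝ) : Continuous fun u => ‖G u + ε • W u‖ := (hG.add (hW.const_smul ε)).norm
  refine (intervalIntegral.hasDerivAt_integral_of_dominated_loc_of_lip (bound := fun u => ‖W u‖)
    Filter.univ_mem (.of_forall fun ε => (hcont ε).aestronglyMeasurable)
    ((hcont 0).intervalIntegrable a b)
    ((hG.inner hW).measurable.div hG.norm.measurable).aestronglyMeasurable
    (.of_forall fun u _ => ?_) (hW.norm.intervalIntegrable a b)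
    (.of_forall fun u hu => ?_)).2
  · simpa [Real.nnabs_of_nonneg (norm_nonneg _)] using
      (lipschitzWith_norm_add_smul (G u) (W u)).lipschitzOnWith (s := Set.univ)
  · simpa using (hasDerivAt_add_smul (G u) (W u) 0).norm (by simpa using hG0 u hu)

theorem hasDerivAt_length_add_smul {γ V : ℝ → E} {L : ℝ} (hL : 0 ≤ L)
    (hγ : ContDiff ℝ 1 γ) (hV : ContDiff ℝ 1 V) (hunit : ∀ u ∈ Set.Icc 0 L, ‖deriv γ u‖ = 1) :
    HasDerivAt (fun ε : ℝ => ∫ u in (0:ℝ)..L, ‖deriv (fun r => γ r + ε • V r) u‖)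
      (∫ u in (0:ℝ)..L, ⟪deriv γ u, deriv V u⟫) 0 := by
  have hunit' : ∀ u ∈ [[0, L]], ‖deriv γ u‖ = 1 := by rwa [Set.uIcc_of_le hL]
  have h := hasDerivAt_intervalIntegral_norm_add_smul (a := 0) (b := L)
    hγ.continuous_deriv_one hV.continuous_deriv_one fun u hu =>
      ne_zero_of_norm_ne_zero (a := deriv γ u) (by simp [hunit' u (Set.uIoc_subset_uIcc hu)])
  have hint : Set.EqOn (fun u => ⟪deriv γ u, deriv V u⟫ / ‖deriv γ u‖)
      (fun u => ⟪deriv γ u, deriv V u⟫) [[0, L]] := fun u hu => by simp [hunit' u hu]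
  rw [intervalIntegral.integral_congr hint] at h
  simpa only [deriv_add_smul (hγ.differentiable one_ne_zero) (hV.differentiable one_ne_zero)]

theorem integral_norm_deriv_eq_of_norm_eq_one {γ : ℝ → E} {L : ℝ} (hL : 0 ≤ L)
    (hunit : ∀ u ∈ Set.Icc 0 L, ‖deriv γ u‖ = 1) : ∫ u in (0:ℝ)..L, ‖deriv γ u‖ = L := by
  rw [intervalIntegral.integral_congr (g := fun _ => (1 : ℝ))
    fun u hu => hunit u (by rwa [Set.uIcc_of_le hL] at hu)]
  simp

noncomputable def jetCurvature (a b : E) : ℝ :=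
  ‖⟪a, a⟫ • b - ⟪b, a⟫ • a‖ / ‖a‖ ^ 4

theorem jetCurvature_const_smul (c : ℝ) (a b : E) :
    jetCurvature (c • a) (c • b) = |c|⁻¹ * jetCurvature a b := by
  rcases eq_or_ne c 0 with rfl | hc
  · simp [jetCurvature]
  have hvec : ⟪c • a, c • a⟫ • (c • b) - ⟪c • b, c • a⟫ • (c • a)
      = c ^ 3 • (⟪a, a⟫ • b - ⟪b, a⟫ • a) := by
    simp only [real_inner_smul_left, real_inner_smul_right, smul_smul, smul_sub]
    module
  rw [jetCurvature, jetCurvature, hvec, norm_smul, norm_smul, norm_pow, Real.norm_eq_abs]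
  have : |c| ≠ 0 := abs_ne_zero.mpr hc
  field_simp

theorem jetCurvature_of_inner_eq_zero {a b : E} (ha : ‖a‖ = 1) (hab : ⟪b, a⟫ = 0) :
    jetCurvature a b = ‖b‖ := by
  simp [jetCurvature, ha, hab]

theorem hasDerivAt_jetCurvature {a a' b b' : E} (ha : ‖a‖ = 1) (hb : b ≠ 0) (hab : ⟪b, a⟫ = 0) :
    HasDerivAt (fun ε : ℝ => jetCurvature (a + ε • a') (b + ε • b'))
      (⟪b, b'⟫ / ‖b‖ - 2 * ‖b‖ * ⟪a, a'⟫) 0 := by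
  have hA := hasDerivAt_add_smul a a' 0
  have hB := hasDerivAt_add_smul b b' 0
  have hw := ((hA.inner ℝ hA).fun_smul hB).fun_sub ((hB.inner ℝ hA).fun_smul hA)
  have hw0 : ⟪a, a⟫ • b - ⟪b, a⟫ • a = b := by simp [ha, hab]
  have hnum := hw.norm (by simp only [zero_smul, add_zero, hw0]; exact hb)
  have hden := (hA.norm (by simp [← norm_ne_zero_iff, ha])).fun_pow 4
  refine (hnum.div hden (by simp [ha])).congr_deriv ?_
  simp only [zero_smul, add_zero, hw0]
  simp only [inner_add_right, inner_sub_right, real_inner_smul_right, real_inner_self_eq_norm_sq,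
    ha, hab, real_inner_comm a' a]
  have : ‖b‖ ≠ 0 := norm_ne_zero_iff.mpr hb
  field_simp
  ring

end

theorem curv_eq_jetCurvature {n : ℕ} (α : ℝ → EuclideanSpace ℝ (Fin n)) (t : ℝ) :
    curv α t = jetCurvature (deriv α t) (deriv (deriv α) t) := rfl

theorem curv_const_smul {n : ℕ} (c : ℝ) (α : ℝ → EuclideanSpace ℝ (Fin n)) (t : ℝ) :
    curv (fun s => c • α s) t = |c|⁻¹ * curv α t := by
  have h : deriv (fun s => c • α s) = fun s => c • deriv α s :=
    funext fun s => deriv_fun_const_smul_field c α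
  rw [curv_eq_jetCurvature, h, deriv_fun_const_smul_field c (deriv α), jetCurvature_const_smul,
    curv_eq_jetCurvature]

theorem curv_add_smul {n : ℕ} {f g : ℝ → EuclideanSpace ℝ (Fin n)} (hf : ContDiff ℝ 2 f)
    (hg : ContDiff ℝ 2 g) (c t : ℝ) :
    curv (fun s => f s + c • g s) t
      = jetCurvature (deriv f t + c • deriv g t) (deriv (deriv f) t + c • deriv (deriv g) t) := by
  rw [curv_eq_jetCurvature, deriv_add_smul (hf.differentiable two_ne_zero)
    (hg.differentiable two_ne_zero), deriv_add_smul hf.differentiable_deriv_two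
    hg.differentiable_deriv_two]

theorem first_variation_of_curvature_rescaled_general {n : ℕ} (L : ℝ) (hL : 0 < L)
    (γ V : ℝ → EuclideanSpace ℝ (Fin n))
    (hγ : ContDiff ℝ 2 γ) (hV : ContDiff ℝ 2 V)
    (hunit : ∀ t ∈ Set.Icc (0 : ℝ) L, ‖deriv γ t‖ = 1)
    (hκ : ∀ t ∈ Set.Icc (0 : ℝ) L, ‖deriv (deriv γ) t‖ = 1) :
    ∀ t ∈ Set.Icc (0 : ℝ) L,
      HasDerivAt
        (fun ε : ℝ =>
          curv (fun s =>
            (L / ∫ u in (0:ℝ)..L, ‖deriv (fun r => γ r + ε • V r) u‖) •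
              (γ s + ε • V s)) t)
        ((inner ℝ (deriv (deriv γ) t) (deriv (deriv V) t) : ℝ)
          - 2 * (inner ℝ (deriv γ t) (deriv V t) : ℝ)
          + (1 / L) * ∫ u in (0:ℝ)..L, (inner ℝ (deriv γ u) (deriv V u) : ℝ)) 0 := by
  intro t ht
  set ℓ : ℝ → ℝ := fun ε => ∫ u in (0:ℝ)..L, ‖deriv (fun r => γ r + ε • V r) u‖
  have hℓ0 : ℓ 0 = L := by simpa [ℓ] using integral_norm_deriv_eq_of_norm_eq_one hL.le hunit
  have hℓ' : HasDerivAt ℓ _ 0 :=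
    hasDerivAt_length_add_smul hL.le (hγ.of_le one_le_two) (hV.of_le one_le_two) hunit
  have horth : ⟪deriv (deriv γ) t, deriv γ t⟫ = 0 := by
    rw [real_inner_comm]
    exact (hγ.differentiable_deriv_two t).hasDerivAt.inner_eq_zero_of_norm_eqOn
      (uniqueDiffOn_Icc hL t ht) ht hunit
  have hK := hasDerivAt_jetCurvature (a' := deriv V t) (b' := deriv (deriv V) t) (hunit t ht)
    (ne_zero_of_norm_ne_zero (by rw [hκ t ht]; exact one_ne_zero)) horth
  have hcurv : ∀ ε, curv (fun s => (L / ℓ ε) • (γ s + ε • V s)) t = ℓ ε / L *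
      jetCurvature (deriv γ t + ε • deriv V t) (deriv (deriv γ) t + ε • deriv (deriv V) t) := by
    intro ε
    have hℓpos : 0 ≤ ℓ ε := intervalIntegral.integral_nonneg hL.le fun _ _ => norm_nonneg _
    rw [curv_const_smul, curv_add_smul hγ hV, abs_of_nonneg (div_nonneg hL.le hℓpos), inv_div]
  refine (((hℓ'.div_const L).mul hK).congr_deriv ?_).congr_of_eventuallyEq (.of_forall hcurv)
  simp only [zero_smul, add_zero]
  rw [hℓ0, jetCurvature_of_inner_eq_zero (hunit t ht) horth, hκ t ht]
  field_simp
  ring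

/-- First variation of curvature for the length-rescaled normal variation
Γ_ε = (L/ℓ(γ_ε)) γ_ε of a unit-speed curve of constant curvature 1. -/
theorem first_variation_of_curvature_rescaled {n : ℕ} (L : ℝ) (hL : 0 < L)
    (γ V : ℝ → EuclideanSpace ℝ (Fin n))
    (hγ : ContDiff ℝ 2 γ) (hV : ContDiff ℝ 2 V)
    (hunit : ∀ t ∈ Set.Icc (0 : ℝ) L, ‖deriv γ t‖ = 1)
    (hκ : ∀ t ∈ Set.Icc (0 : ℝ) L, ‖deriv (deriv γ) t‖ = 1)
    (horth : ∀ t ∈ Set.Icc (0 : ℝ) L, (inner ℝ (V t) (deriv γ t) : ℝ) = 0) :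
    ∀ t ∈ Set.Icc (0 : ℝ) L,
      HasDerivAt
        (fun ε : ℝ =>
          curv (fun s =>
            (L / ∫ u in (0:ℝ)..L, ‖deriv (fun r => γ r + ε • V r) u‖) •
              (γ s + ε • V s)) t)
        ((inner ℝ (deriv (deriv γ) t) (deriv (deriv V) t) : ℝ)
          - 2 * (inner ℝ (deriv γ t) (deriv V t) : ℝ)
          + (1 / L) * ∫ u in (0:ℝ)..L, (inner ℝ (deriv γ u) (deriv V u) : ℝ)) 0 :=
  first_variation_of_curvature_rescaled_general L hL γ V hγ hV hunit hκ
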